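/- For every (α,β,γ,δ) ∈ (K^*)^3 × K, the formulas v_k·e1 = α v_{k+1 (mod l)}, v_k·e3 = q^{-2k} β v_k, v_k·z = γ v_k, v_k·w = α^{-1}(δ + ((1-q^{-4k})/(1-q^{-4})) β^2) v_{k-1 (mod l)} (for 0 ≤ k ≤ l-1) define a right B-module structure on the K-vector space with basis v_0,…,v_{l-1}, and the resulting module V1(α,β,γ,δ) is a simple B-module of K-dimension l. -/

import Mathlib

noncomputable section

open MulOpposite

/-- The defining relations of the "good" subalgebra `B` of `U_q^+(B_2)`, on the free algebra
on generators `e1 = ι 0`, `e3 = ι 1`, `z = ι 2`, `w = ι 3`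
(where `w = e2·e3 + z/(q^2-1)` inside `U_q^+(B_2)`). -/
inductive BqRel (K : Type*) [Field K] (q : K) :
    FreeAlgebra K (Fin 4) → FreeAlgebra K (Fin 4) → Prop
  | e1e3 : BqRel K q (FreeAlgebra.ι K 0 * FreeAlgebra.ι K 1)
      (q⁻¹ ^ 2 • (FreeAlgebra.ι K 1 * FreeAlgebra.ι K 0))
  | e1z : BqRel K q (FreeAlgebra.ι K 0 * FreeAlgebra.ι K 2)
      (FreeAlgebra.ι K 2 * FreeAlgebra.ι K 0)
  | e3z : BqRel K q (FreeAlgebra.ι K 1 * FreeAlgebra.ι K 2)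
      (FreeAlgebra.ι K 2 * FreeAlgebra.ι K 1)
  | wz : BqRel K q (FreeAlgebra.ι K 3 * FreeAlgebra.ι K 2)
      (FreeAlgebra.ι K 2 * FreeAlgebra.ι K 3)
  | we3 : BqRel K q (FreeAlgebra.ι K 3 * FreeAlgebra.ι K 1)
      (q ^ 2 • (FreeAlgebra.ι K 1 * FreeAlgebra.ι K 3))
  | we1 : BqRel K q (FreeAlgebra.ι K 3 * FreeAlgebra.ι K 0)
      (FreeAlgebra.ι K 0 * FreeAlgebra.ι K 3 - FreeAlgebra.ι K 1 ^ 2)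

/-- The algebra `B`, presented by generators `e1, e3, z, w` and the relations above. -/
abbrev Bq (K : Type*) [Field K] (q : K) : Type _ := RingQuot (BqRel K q)

variable (K : Type*) [Field K] (q : K)

/-- The generator `e1` of `B`. -/
def Be1 : Bq K q := RingQuot.mkAlgHom K (BqRel K q) (FreeAlgebra.ι K 0)
/-- The generator `e3` of `B`. -/
def Be3 : Bq K q := RingQuot.mkAlgHom K (BqRel K q) (FreeAlgebra.ι K 1)
/-- The generator `z` of `B`. -/
def Bz : Bq K q := RingQuot.mkAlgHom K (BqRel K q) (FreeAlgebra.ι K 2)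
/-- The generator `w` of `B`. -/
def Bw : Bq K q := RingQuot.mkAlgHom K (BqRel K q) (FreeAlgebra.ι K 3)

/-!
The generator `e3` acts diagonally with eigenvalues `q^{-2k} β`, which are pairwise distinct
because `q^{-2}` has order exactly `l`; hence a `B`-invariant subspace is spanned by the basis
vectors it contains. Since `α ≠ 0`, `e1` moves `v_k` to a multiple of `v_{k+1}`, so an invariant
subspace containing one basis vector contains all of them. The defining relations of `B` reduce
to identities between the weights, where `q^{2l} = 1` takes care of the wrap-around `l - 1 → 0`.
-/

open Function

section WeightedShift

variable {R ι : Type*} [CommSemiring R]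

def weightedShift (s : ι → R) (σ : Equiv.Perm ι) : Module.End R (ι → R) where
  toFun v j := s (σ.symm j) * v (σ.symm j)
  map_add' u v := by ext j; simp [mul_add]
  map_smul' c v := by ext j; simp [mul_left_comm]

@[simp]
lemma weightedShift_apply (s : ι → R) (σ : Equiv.Perm ι) (v : ι → R) (j : ι) :
    weightedShift s σ v j = s (σ.symm j) * v (σ.symm j) :=
  rfl

lemma weightedShift_single [DecidableEq ι] (s : ι → R) (σ : Equiv.Perm ι) (k : ι) :
    weightedShift s σ (Pi.single k 1) = s k • Pi.single (σ k) 1 := by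
  ext j
  rcases eq_or_ne j (σ k) with rfl | hj
  · simp
  · simp [Equiv.symm_apply_eq, hj]

lemma weightedShift_mul (s t : ι → R) (σ τ : Equiv.Perm ι) :
    weightedShift s σ * weightedShift t τ = weightedShift (fun k ↦ t k * s (τ k)) (σ * τ) := by
  ext v j
  simp only [Module.End.mul_apply, weightedShift_apply, Equiv.Perm.mul_def, Equiv.symm_trans,
    Equiv.trans_apply, Equiv.apply_symm_apply]
  ring

lemma weightedShift_one_apply (s : ι → R) (v : ι → R) (j : ι) :
    weightedShift s 1 v j = s j * v j :=
  rfl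

lemma smul_weightedShift (c : R) (s : ι → R) (σ : Equiv.Perm ι) :
    c • weightedShift s σ = weightedShift (c • s) σ := by
  ext v j
  simp [mul_assoc]

lemma weightedShift_sub {R : Type*} [CommRing R] (s t : ι → R) (σ : Equiv.Perm ι) :
    weightedShift s σ - weightedShift t σ = weightedShift (s - t) σ := by
  ext v j
  simp [sub_mul]

end WeightedShift

section Simplicity

variable {F ι : Type*} [Field F] [DecidableEq ι] {W : Submodule F (ι → F)}

lemma prod_sub_mul_mem_of_diagonal_invariant {d : ι → F}
    (hW : ∀ v ∈ W, weightedShift d 1 v ∈ W) (s : Finset ι) {v : ι → F} (hv : v ∈ W) :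
    (fun i ↦ (∏ j ∈ s, (d i - d j)) * v i) ∈ W := by
  induction s using Finset.induction_on with
  | empty => simpa using hv
  | insert a s ha ih =>
    convert W.sub_mem (hW _ ih) (W.smul_mem (d a) ih) using 1
    ext i
    simp only [Pi.sub_apply, Pi.smul_apply, weightedShift_one_apply, smul_eq_mul,
      Finset.prod_insert ha]
    ring

lemma single_mem_of_diagonal_invariant [Fintype ι] {d : ι → F} (hd : Injective d)
    (hW : ∀ v ∈ W, weightedShift d 1 v ∈ W) {v : ι → F} (hv : v ∈ W) (k : ι) :
    Pi.single k (v k) ∈ W := by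
  set P := ∏ j ∈ Finset.univ.erase k, (d k - d j)
  have hP : P ≠ 0 := Finset.prod_ne_zero_iff.mpr fun j hj ↦
    sub_ne_zero.mpr fun h ↦ Finset.ne_of_mem_erase hj (hd h).symm
  have hPv : P • Pi.single k (v k) ∈ W := by
    convert prod_sub_mul_mem_of_diagonal_invariant hW (Finset.univ.erase k) hv using 1
    ext i
    rcases eq_or_ne i k with rfl | hik
    · simp [P]
    · simp [hik, Finset.prod_eq_zero (Finset.mem_erase.mpr ⟨hik, Finset.mem_univ i⟩)]
  simpa [smul_smul, hP] using W.smul_mem P⁻¹ hPv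

lemma exists_single_mem_of_diagonal_invariant [Fintype ι] {d : ι → F} (hd : Injective d)
    (hW : ∀ v ∈ W, weightedShift d 1 v ∈ W) (hne : W ≠ ⊥) : ∃ k, Pi.single k (1 : F) ∈ W := by
  obtain ⟨v, hv, hv0⟩ := W.exists_mem_ne_zero_of_ne_bot hne
  obtain ⟨k, hk⟩ : ∃ k, v k ≠ 0 := by simpa [funext_iff] using hv0
  refine ⟨k, ?_⟩
  simpa [← Pi.single_smul', hk] using
    W.smul_mem (v k)⁻¹ (single_mem_of_diagonal_invariant hd hW hv k)

lemma eq_top_of_single_mem_of_cyclic_invariant [Finite ι] {σ : Equiv.Perm ι}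
    (hσ : ∀ i j, σ.SameCycle i j) {a : F} (ha : a ≠ 0)
    (hW : ∀ v ∈ W, weightedShift (fun _ ↦ a) σ v ∈ W) {k : ι} (hk : Pi.single k 1 ∈ W) :
    W = ⊤ := by
  have hstep : ∀ i, Pi.single i (1 : F) ∈ W → Pi.single (σ i) (1 : F) ∈ W := fun i hi ↦ by
    simpa [weightedShift_single, smul_smul, ha] using W.smul_mem a⁻¹ (hW _ hi)
  have hall : ∀ j, Pi.single j (1 : F) ∈ W := fun j ↦ by
    obtain ⟨t, rfl⟩ := (hσ k j).exists_nat_pow_eq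
    induction t with
    | zero => simpa using hk
    | succ t ih => simpa [pow_succ', Equiv.Perm.mul_apply] using hstep _ ih
  rw [eq_top_iff, ← (Pi.basisFun F ι).span_eq, Submodule.span_le]
  rintro _ ⟨j, rfl⟩
  simpa using hall j

theorem eq_bot_or_eq_top_of_invariant [Fintype ι] {d : ι → F} (hd : Injective d)
    {σ : Equiv.Perm ι} (hσ : ∀ i j, σ.SameCycle i j) {a : F} (ha : a ≠ 0)
    (hD : ∀ v ∈ W, weightedShift d 1 v ∈ W) (hS : ∀ v ∈ W, weightedShift (fun _ ↦ a) σ v ∈ W) :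
    W = ⊥ ∨ W = ⊤ := by
  refine or_iff_not_imp_left.mpr fun hne ↦ ?_
  obtain ⟨k, hk⟩ := exists_single_mem_of_diagonal_invariant hd hD hne
  exact eq_top_of_single_mem_of_cyclic_invariant hσ ha hS hk

end Simplicity

lemma finRotate_sameCycle {n : ℕ} [NeZero n] (i j : Fin n) : (finRotate n).SameCycle i j :=
  ⟨(j - i : Fin n).val, by
    rw [zpow_natCast, ← Equiv.Perm.iterate_eq_pow, ← finCycle_eq_finRotate_iterate]
    simp⟩

lemma pow_val_finRotate {M : Type*} [Monoid M] {x : M} {n : ℕ} (hx : x ^ n = 1) (k : Fin n) :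
    x ^ (finRotate n k : ℕ) = x ^ (k : ℕ) * x := by
  cases n with
  | zero => exact k.elim0
  | succ n =>
    rw [coe_finRotate, ← pow_succ]
    split_ifs with h
    · simp [h, hx]
    · rfl

lemma IsPrimitiveRoot.sq {M : Type*} [CommMonoid M] {ζ : M} {m : ℕ} (h : IsPrimitiveRoot ζ m) :
    IsPrimitiveRoot (ζ ^ 2) (if Odd m then m else m / 2) := by
  split_ifs with hm
  · exact h.pow_of_coprime 2 (Nat.coprime_two_left.mpr hm)
  · exact h.pow_of_dvd two_ne_zero (Nat.not_odd_iff_even.mp hm).two_dvd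

namespace V1

variable {K} {l : ℕ} (α β γ δ : K)

def e3Weight (k : Fin l) : K := q⁻¹ ^ (2 * (k : ℕ)) * β

def wWeight (k : Fin l) : K :=
  α⁻¹ * (δ + ((1 - q⁻¹ ^ (4 * (k : ℕ))) / (1 - q⁻¹ ^ 4)) * β ^ 2)

lemma e3Weight_finRotate (hq : (q ^ 2) ^ l = 1) (k : Fin l) :
    e3Weight q β (finRotate l k) = q⁻¹ ^ 2 * e3Weight q β k := by
  have hq' : (q⁻¹ ^ 2) ^ l = 1 := by rw [inv_pow, inv_pow, hq, inv_one]
  simp only [e3Weight, pow_mul, pow_val_finRotate hq' k]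
  ring

lemma e3Weight_finRotate_symm (hq : (q ^ 2) ^ l = 1) (k : Fin l) :
    e3Weight q β ((finRotate l).symm k) = q ^ 2 * e3Weight q β k := by
  have hq0 : q ≠ 0 := by rintro rfl; simp [(Fin.pos k).ne'] at hq
  rw [← (finRotate l).apply_symm_apply k, e3Weight_finRotate q β hq, Equiv.apply_symm_apply,
    ← mul_assoc, ← mul_pow, mul_inv_cancel₀ hq0, one_pow, one_mul]

lemma wWeight_finRotate (hα : α ≠ 0) (hq : (q ^ 2) ^ l = 1) (hq4 : q ^ 4 ≠ 1) (k : Fin l) :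
    wWeight q α β δ (finRotate l k) * α = wWeight q α β δ k * α + e3Weight q β k ^ 2 := by
  have hq4' : (q⁻¹ ^ 4) ^ l = 1 := by
    rw [inv_pow, inv_pow, show q ^ 4 = (q ^ 2) ^ 2 by ring, ← pow_mul, mul_comm, pow_mul, hq,
      one_pow, inv_one]
  have hne : 1 - q⁻¹ ^ 4 ≠ 0 := by
    rw [sub_ne_zero, inv_pow, ne_comm, inv_ne_one]
    exact hq4
  have hsq : e3Weight q β k ^ 2 = (q⁻¹ ^ 4) ^ (k : ℕ) * β ^ 2 := by rw [e3Weight]; ring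
  simp only [hsq, wWeight, pow_mul, pow_val_finRotate hq4' k]
  generalize q⁻¹ ^ 4 = x at hne ⊢
  field_simp
  ring

lemma e3Weight_injective (hq : IsPrimitiveRoot (q ^ 2) l) (hβ : β ≠ 0) :
    Injective (e3Weight (l := l) q β) := by
  intro i j h
  rw [e3Weight, e3Weight, mul_left_inj' hβ, pow_mul, pow_mul, inv_pow] at h
  exact Fin.ext (hq.inv.pow_inj i.isLt j.isLt h)

def e1 : Module.End K (Fin l → K) := weightedShift (fun _ ↦ α) (finRotate l)

def e3 : Module.End K (Fin l → K) := weightedShift (e3Weight q β) 1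

def w : Module.End K (Fin l → K) := weightedShift (wWeight q α β δ) (finRotate l).symm

-- `B` acts on the right, so each defining relation holds for the operators in reversed order.
lemma e3_mul_e1 (hq : (q ^ 2) ^ l = 1) :
    (e3 q β * e1 α : Module.End K (Fin l → K)) = q⁻¹ ^ 2 • (e1 α * e3 q β) := by
  rw [e1, e3, weightedShift_mul, weightedShift_mul, smul_weightedShift, one_mul, mul_one]
  congr 1
  funext k
  simp only [Pi.smul_apply, smul_eq_mul, e3Weight_finRotate q β hq]
  ring

lemma e3_mul_w (hq : (q ^ 2) ^ l = 1) :
    (e3 q β * w q α β δ : Module.End K (Fin l → K)) = q ^ 2 • (w q α β δ * e3 q β) := by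
  rw [e3, w, weightedShift_mul, weightedShift_mul, smul_weightedShift, one_mul, mul_one]
  congr 1
  funext k
  simp only [Pi.smul_apply, smul_eq_mul, Equiv.Perm.coe_one, id_eq,
    e3Weight_finRotate_symm q β hq]
  ring

lemma e1_mul_w (hα : α ≠ 0) (hq : (q ^ 2) ^ l = 1) (hq4 : q ^ 4 ≠ 1) :
    (e1 α * w q α β δ : Module.End K (Fin l → K)) = w q α β δ * e1 α - e3 q β ^ 2 := by
  rw [e1, e3, w, sq, weightedShift_mul, weightedShift_mul, weightedShift_mul, one_mul,
    ← Equiv.Perm.inv_def, mul_inv_cancel, inv_mul_cancel, weightedShift_sub]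
  congr 1
  funext k
  simp only [Pi.sub_apply, Equiv.Perm.coe_one, id_eq]
  linear_combination -wWeight_finRotate q α β δ hα hq hq4 k

def gens : Fin 4 → (Module.End K (Fin l → K))ᵐᵒᵖ :=
  ![op (e1 α), op (e3 q β), algebraMap K _ γ, op (w q α β δ)]

lemma lift_gens_eq_of_rel (hα : α ≠ 0) (hq : (q ^ 2) ^ l = 1) (hq4 : q ^ 4 ≠ 1)
    ⦃a b : FreeAlgebra K (Fin 4)⦄ (h : BqRel K q a b) :
    FreeAlgebra.lift K (gens (l := l) q α β γ δ) a = FreeAlgebra.lift K (gens q α β γ δ) b := by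
  cases h <;>
    simp only [map_mul, map_smul, map_sub, map_pow, FreeAlgebra.lift_ι_apply, gens,
      Matrix.cons_val]
  case e1e3 => rw [← op_mul, ← op_mul, ← op_smul, e3_mul_e1 q α β hq]
  case e1z | e3z | wz => exact (Algebra.commutes γ _).symm
  case we3 => rw [← op_mul, ← op_mul, ← op_smul, e3_mul_w q α β δ hq]
  case we1 => rw [← op_mul, ← op_mul, ← op_pow, ← op_sub, e1_mul_w q α β δ hα hq hq4]

def rep (hα : α ≠ 0) (hq : (q ^ 2) ^ l = 1) (hq4 : q ^ 4 ≠ 1) :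
    Bq K q →ₐ[K] (Module.End K (Fin l → K))ᵐᵒᵖ :=
  RingQuot.liftAlgHom K
    ⟨FreeAlgebra.lift K (gens q α β γ δ), lift_gens_eq_of_rel q α β γ δ hα hq hq4⟩

variable (hα : α ≠ 0) (hq : (q ^ 2) ^ l = 1) (hq4 : q ^ 4 ≠ 1)

@[simp]
lemma rep_Be1 : (rep q α β γ δ hα hq hq4 (Be1 K q)).unop = e1 α := by
  simp [rep, Be1, gens]

@[simp]
lemma rep_Be3 : (rep q α β γ δ hα hq hq4 (Be3 K q)).unop = e3 q β := by
  simp [rep, Be3, gens]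

@[simp]
lemma rep_Bz : (rep q α β γ δ hα hq hq4 (Bz K q)).unop = algebraMap K _ γ := by
  simp [rep, Bz, gens]

@[simp]
lemma rep_Bw : (rep q α β γ δ hα hq hq4 (Bw K q)).unop = w q α β δ := by
  simp [rep, Bw, gens]

end V1

theorem stmt9 (m : ℕ) (hm : 5 ≤ m) (hq : IsPrimitiveRoot q m)
    (l : ℕ) (hl : l = if Odd m then m else m / 2)
    (α β γ δ : K) (hα : α ≠ 0) (hβ : β ≠ 0) :
    ∃ ρ : Bq K q →ₐ[K] (Module.End K (Fin l → K))ᵐᵒᵖ,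
      (∀ k : Fin l, (ρ (Be1 K q)).unop (Pi.single k 1) =
        α • (Pi.single (finRotate l k) 1 : Fin l → K)) ∧
      (∀ k : Fin l, (ρ (Be3 K q)).unop (Pi.single k 1) =
        (q⁻¹ ^ (2 * (k : ℕ)) * β) • (Pi.single k 1 : Fin l → K)) ∧
      (∀ k : Fin l, (ρ (Bz K q)).unop (Pi.single k 1) =
        γ • (Pi.single k 1 : Fin l → K)) ∧
      (∀ k : Fin l, (ρ (Bw K q)).unop (Pi.single k 1) =
        (α⁻¹ * (δ + ((1 - q⁻¹ ^ (4 * (k : ℕ))) / (1 - q⁻¹ ^ 4)) * β ^ 2)) •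
          (Pi.single ((finRotate l).symm k) 1 : Fin l → K)) ∧
      Nontrivial (Fin l → K) ∧
      (∀ W : Submodule K (Fin l → K),
        (∀ b : Bq K q, ∀ v ∈ W, (ρ b).unop v ∈ W) → W = ⊥ ∨ W = ⊤) ∧
      Module.finrank K (Fin l → K) = l := by
  have hq2 : IsPrimitiveRoot (q ^ 2) l := hl ▸ hq.sq
  have : NeZero l := ⟨by split_ifs at hl <;> omega⟩
  have hq4 : q ^ 4 ≠ 1 := hq.pow_ne_one_of_pos_of_lt (by norm_num) (by omega)
  refine ⟨V1.rep q α β γ δ hα hq2.pow_eq_one hq4, fun k ↦ ?_, fun k ↦ ?_, fun k ↦ ?_,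
    fun k ↦ ?_, inferInstance, fun W hW ↦ ?_, by simp⟩
  · simp [V1.e1, weightedShift_single]
  · simp [V1.e3, weightedShift_single, V1.e3Weight]
  · simp
  · simp [V1.w, weightedShift_single, V1.wWeight]
  · exact eq_bot_or_eq_top_of_invariant (V1.e3Weight_injective q β hq2 hβ) finRotate_sameCycle hα
      (fun v hv ↦ by simpa [V1.e3] using hW (Be3 K q) v hv)
      (fun v hv ↦ by simpa [V1.e1] using hW (Be1 K q) v hv)
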